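/- arXiv:2508.14528 — 2 statements merged into one kernel-verified Lean document; each statement's English description precedes it below -/
import Mathlib

section
/- With L_nice, r_nice as defined from the typed instance, the real inequality (1/T)·L_nice ≥ (∑_{i∈①∪②} α'_i) + 3⌊|③|/2⌋ + |④| + ⌊|⑤|/2⌋ + ⌊|⑥|/3⌋ + r_nice/T holds. (This is the displayed sufficient claim in the proof of Lemma 2.) -/
open Finset

variable {ι : Type*} [DecidableEq ι]

/-- The set of classes of a given type (types ①–⑧ are indexed by `Fin 8`,
with `0 ↔ ①`, `1 ↔ ②`, `2 ↔ ③`, `3 ↔ ④`, `4 ↔ ⑤`, `5 ↔ ⑥`, `6 ↔ ⑦`, `7 ↔ ⑧`). -/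
def typeSet (C : Finset ι) (typ : ι → Fin 8) (k : Fin 8) : Finset ι :=
  C.filter fun i => typ i = k

/-- `α'_i = ⌊P_i/(T - s_i)⌋` (floor of a real, taken in ℕ). -/
noncomputable def alpha' (T : ℝ) (s P : ι → ℝ) (i : ι) : ℕ :=
  ⌊P i / (T - s i)⌋₊

/-- `α_i = ⌈P_i/(T - s_i)⌉` (ceiling of a real, taken in ℕ). -/
noncomputable def alphaCeil (T : ℝ) (s P : ι → ℝ) (i : ι) : ℕ :=
  ⌈P i / (T - s i)⌉₊

/-- The obligatory load `L_nice` of a nice instance. -/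
noncomputable def Lnice (T : ℝ) (C : Finset ι) (s P : ι → ℝ) (typ : ι → Fin 8) : ℝ :=
  (∑ i ∈ typeSet C typ 0 ∪ typeSet C typ 1, (alpha' T s P i : ℝ) * s i)
    + (∑ i ∈ typeSet C typ 2, 2 * s i)
    + (∑ i ∈ typeSet C typ 3 ∪ typeSet C typ 4 ∪ typeSet C typ 5 ∪ typeSet C typ 6
        ∪ typeSet C typ 7, s i)
    + ∑ i ∈ C, P i

/-- The residual load `r_nice`. -/
noncomputable def rnice (C : Finset ι) (s P : ι → ℝ) (typ : ι → Fin 8)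
    (R3 R5 R6 : Finset ι) : ℝ :=
  (∑ i ∈ R3, (2 * s i + P i))
    + ∑ i ∈ R5 ∪ R6 ∪ typeSet C typ 6 ∪ typeSet C typ 7, (s i + P i)

/-- The machine lower bound `m_nice`. -/
noncomputable def mnice (T : ℝ) (C : Finset ι) (s P : ι → ℝ) (typ : ι → Fin 8)
    (R3 R5 R6 : Finset ι) : ℕ :=
  (∑ i ∈ typeSet C typ 0 ∪ typeSet C typ 1, alpha' T s P i)
    + 3 * ((typeSet C typ 2).card / 2)
    + (typeSet C typ 3).card
    + (typeSet C typ 4).card / 2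
    + (typeSet C typ 5).card / 3
    + ⌈rnice C s P typ R3 R5 R6 / T⌉₊


private lemma typeSet_disjoint {ι : Type*} [DecidableEq ι] (C : Finset ι) (typ : ι → Fin 8)
    {j k : Fin 8} (h : j ≠ k) : Disjoint (typeSet C typ j) (typeSet C typ k) := by
  rw [Finset.disjoint_left]
  intro a ha hb
  simp only [typeSet, Finset.mem_filter] at ha hb
  exact h (ha.2 ▸ hb.2 ▸ rfl)

private lemma sum_lower {ι : Type*} (A : Finset ι) (f : ι → ℝ) (b : ℝ)
    (h : ∀ i ∈ A, b ≤ f i) : (A.card : ℝ) * b ≤ ∑ i ∈ A, f i := by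
  simpa [nsmul_eq_mul] using Finset.card_nsmul_le_sum A f b h

/-- the displayed sufficient claim in the proof of Lemma 2. -/
theorem stmt_3 (T : ℝ) (hT : 0 < T) (m : ℕ) (hm : 1 ≤ m)
    (C : Finset ι) (s P : ι → ℝ) (typ : ι → Fin 8)
    (hs : ∀ i ∈ C, 0 ≤ s i ∧ s i < T) (hP : ∀ i ∈ C, 0 < P i)
    (h1 : ∀ i ∈ C, typ i = 0 →
      2 * T / 3 ≤ s i ∧ T ≤ s i + P i ∧ s i + P i ≤ (m : ℝ) * T)
    (h2 : ∀ i ∈ C, typ i = 1 →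
      T / 3 ≤ s i ∧ s i < 2 * T / 3 ∧ 2 * T - s i ≤ s i + P i ∧ s i + P i ≤ (m : ℝ) * T)
    (h3 : ∀ i ∈ C, typ i = 2 →
      T / 3 ≤ s i ∧ s i < 2 * T / 3 ∧ 4 * T / 3 < s i + P i ∧ s i + P i < 2 * T - s i)
    (h4 : ∀ i ∈ C, typ i = 3 →
      T / 3 ≤ s i ∧ s i < 2 * T / 3 ∧ T ≤ s i + P i ∧ s i + P i ≤ 4 * T / 3)
    (h5 : ∀ i ∈ C, typ i = 4 →
      T / 3 ≤ s i ∧ s i < 2 * T / 3 ∧ T / 2 < s i + P i ∧ s i + P i ≤ 2 * T / 3)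
    (h6 : ∀ i ∈ C, typ i = 5 →
      T / 3 ≤ s i ∧ s i < 2 * T / 3 ∧ T / 3 < s i + P i ∧ s i + P i ≤ 4 * T / 9)
    (h7 : ∀ i ∈ C, typ i = 6 → 0 ≤ s i ∧ s i < T / 3)
    (h8 : ∀ i ∈ C, typ i = 7 →
      T / 3 ≤ s i ∧ s i < 2 * T / 3 ∧ 4 * T / 9 < s i + P i ∧ s i + P i ≤ T / 2)
    (R3 R5 R6 : Finset ι)
    (hR3 : R3 ⊆ typeSet C typ 2)
    (hR3card : R3.card = (typeSet C typ 2).card - 2 * ((typeSet C typ 2).card / 2))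
    (hR5 : R5 ⊆ typeSet C typ 4)
    (hR5card : R5.card = (typeSet C typ 4).card - 2 * ((typeSet C typ 4).card / 2))
    (hR6 : R6 ⊆ typeSet C typ 5)
    (hR6card : R6.card = (typeSet C typ 5).card - 3 * ((typeSet C typ 5).card / 3))
    : (1 / T) * Lnice T C s P typ ≥
      ((∑ i ∈ typeSet C typ 0 ∪ typeSet C typ 1, alpha' T s P i : ℕ) : ℝ)
        + 3 * (((typeSet C typ 2).card / 2 : ℕ) : ℝ)
        + ((typeSet C typ 3).card : ℝ)
        + (((typeSet C typ 4).card / 2 : ℕ) : ℝ)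
        + (((typeSet C typ 5).card / 3 : ℕ) : ℝ)
        + rnice C s P typ R3 R5 R6 / T := by
  classical
  have hT' : T ≠ 0 := ne_of_gt hT
  have hmemC : ∀ k : Fin 8, ∀ i ∈ typeSet C typ k, i ∈ C := fun k i hi =>
    Finset.mem_of_mem_filter i hi
  have htyp : ∀ k : Fin 8, ∀ i ∈ typeSet C typ k, typ i = k := fun k i hi =>
    (Finset.mem_filter.1 hi).2
  -- decomposition of ∑ P over C
  have hPdec : ∑ i ∈ C, P i = ∑ k : Fin 8, ∑ i ∈ typeSet C typ k, P i := by
    rw [show (typeSet C typ) = fun k => C.filter fun i => typ i = k from rfl]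
    exact (Finset.sum_fiberwise C typ P).symm
  rw [Fin.sum_univ_eight] at hPdec
  -- type ①∪② bound
  have hA : T * ((∑ i ∈ typeSet C typ 0 ∪ typeSet C typ 1, alpha' T s P i : ℕ) : ℝ) ≤
      (∑ i ∈ typeSet C typ 0 ∪ typeSet C typ 1, (alpha' T s P i : ℝ) * s i)
      + ∑ i ∈ typeSet C typ 0 ∪ typeSet C typ 1, P i := by
    push_cast
    rw [Finset.mul_sum, ← Finset.sum_add_distrib]
    apply Finset.sum_le_sum
    intro i hi
    have hiC : i ∈ C := by
      rcases Finset.mem_union.1 hi with h | h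
      · exact hmemC 0 i h
      · exact hmemC 1 i h
    obtain ⟨hs0, hsT⟩ := hs i hiC
    have hPi := hP i hiC
    have hTs : 0 < T - s i := by linarith
    have hfl : (alpha' T s P i : ℝ) ≤ P i / (T - s i) :=
      Nat.floor_le (div_nonneg hPi.le hTs.le)
    have hmul : (alpha' T s P i : ℝ) * (T - s i) ≤ P i := by
      rw [← div_mul_cancel₀ (P i) (ne_of_gt hTs)]
      exact mul_le_mul_of_nonneg_right hfl hTs.le
    have ha0 : (0:ℝ) ≤ (alpha' T s P i : ℝ) := Nat.cast_nonneg _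
    nlinarith
  -- union splits
  have d01 := typeSet_disjoint C typ (show (0:Fin 8) ≠ 1 by decide)
  have hU01 : ∑ i ∈ typeSet C typ 0 ∪ typeSet C typ 1, P i =
      ∑ i ∈ typeSet C typ 0, P i + ∑ i ∈ typeSet C typ 1, P i :=
    Finset.sum_union d01
  have hU345 : ∑ i ∈ typeSet C typ 3 ∪ typeSet C typ 4 ∪ typeSet C typ 5 ∪ typeSet C typ 6
        ∪ typeSet C typ 7, s i =
      ∑ i ∈ typeSet C typ 3, s i + ∑ i ∈ typeSet C typ 4, s i + ∑ i ∈ typeSet C typ 5, s i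
      + ∑ i ∈ typeSet C typ 6, s i + ∑ i ∈ typeSet C typ 7, s i := by
    rw [Finset.sum_union, Finset.sum_union, Finset.sum_union, Finset.sum_union]
    · exact typeSet_disjoint C typ (by decide)
    · exact Finset.disjoint_union_left.2
        ⟨typeSet_disjoint C typ (by decide), typeSet_disjoint C typ (by decide)⟩
    · exact Finset.disjoint_union_left.2 ⟨Finset.disjoint_union_left.2
        ⟨typeSet_disjoint C typ (by decide), typeSet_disjoint C typ (by decide)⟩,
        typeSet_disjoint C typ (by decide)⟩
    · exact Finset.disjoint_union_left.2 ⟨Finset.disjoint_union_left.2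
        ⟨Finset.disjoint_union_left.2
          ⟨typeSet_disjoint C typ (by decide), typeSet_disjoint C typ (by decide)⟩,
          typeSet_disjoint C typ (by decide)⟩, typeSet_disjoint C typ (by decide)⟩
  -- r decomposition
  have hrdec : rnice C s P typ R3 R5 R6 = (∑ i ∈ R3, (2 * s i + P i))
      + ∑ i ∈ R5, (s i + P i) + ∑ i ∈ R6, (s i + P i)
      + ∑ i ∈ typeSet C typ 6, (s i + P i) + ∑ i ∈ typeSet C typ 7, (s i + P i) := by
    unfold rnice
    rw [Finset.sum_union, Finset.sum_union, Finset.sum_union]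
    · ring
    · exact Disjoint.mono hR5 hR6 (typeSet_disjoint C typ (by decide))
    · exact Finset.disjoint_union_left.2
        ⟨Disjoint.mono_left hR5 (typeSet_disjoint C typ (by decide)),
         Disjoint.mono_left hR6 (typeSet_disjoint C typ (by decide))⟩
    · exact Finset.disjoint_union_left.2 ⟨Finset.disjoint_union_left.2
        ⟨Disjoint.mono_left hR5 (typeSet_disjoint C typ (by decide)),
         Disjoint.mono_left hR6 (typeSet_disjoint C typ (by decide))⟩,
        typeSet_disjoint C typ (by decide)⟩
  -- type ③
  have hc3le : 2 * ((typeSet C typ 2).card / 2) ≤ (typeSet C typ 2).card := Nat.mul_div_le _ _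
  have hc3 : ((typeSet C typ 2 \ R3).card : ℝ) = 2 * (((typeSet C typ 2).card / 2 : ℕ) : ℝ) := by
    rw [Finset.card_sdiff_of_subset hR3, hR3card]
    push_cast [Nat.sub_sub_self hc3le]
    ring
  have h3split : ∑ i ∈ typeSet C typ 2 \ R3, (2 * s i + P i) + ∑ i ∈ R3, (2 * s i + P i)
      = ∑ i ∈ typeSet C typ 2, (2 * s i + P i) := Finset.sum_sdiff hR3
  have h3low : ((typeSet C typ 2 \ R3).card : ℝ) * (3 * T / 2) ≤
      ∑ i ∈ typeSet C typ 2 \ R3, (2 * s i + P i) := by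
    apply sum_lower
    intro i hi
    have hi2 : i ∈ typeSet C typ 2 := (Finset.mem_sdiff.1 hi).1
    obtain ⟨hsl, _, hspl, _⟩ := h3 i (hmemC 2 i hi2) (htyp 2 i hi2)
    linarith
  have h3sumsplit : ∑ i ∈ typeSet C typ 2, (2 * s i + P i)
      = ∑ i ∈ typeSet C typ 2, 2 * s i + ∑ i ∈ typeSet C typ 2, P i :=
    Finset.sum_add_distrib
  -- type ④
  have h4low : ((typeSet C typ 3).card : ℝ) * T ≤ ∑ i ∈ typeSet C typ 3, (s i + P i) := by
    apply sum_lower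
    intro i hi
    obtain ⟨_, _, hspl, _⟩ := h4 i (hmemC 3 i hi) (htyp 3 i hi)
    linarith
  have h4sumsplit : ∑ i ∈ typeSet C typ 3, (s i + P i)
      = ∑ i ∈ typeSet C typ 3, s i + ∑ i ∈ typeSet C typ 3, P i := Finset.sum_add_distrib
  -- type ⑤
  have hc5le : 2 * ((typeSet C typ 4).card / 2) ≤ (typeSet C typ 4).card := Nat.mul_div_le _ _
  have hc5 : ((typeSet C typ 4 \ R5).card : ℝ) = 2 * (((typeSet C typ 4).card / 2 : ℕ) : ℝ) := by
    rw [Finset.card_sdiff_of_subset hR5, hR5card]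
    push_cast [Nat.sub_sub_self hc5le]
    ring
  have h5split : ∑ i ∈ typeSet C typ 4 \ R5, (s i + P i) + ∑ i ∈ R5, (s i + P i)
      = ∑ i ∈ typeSet C typ 4, (s i + P i) := Finset.sum_sdiff hR5
  have h5low : ((typeSet C typ 4 \ R5).card : ℝ) * (T / 2) ≤
      ∑ i ∈ typeSet C typ 4 \ R5, (s i + P i) := by
    apply sum_lower
    intro i hi
    have hi4 : i ∈ typeSet C typ 4 := (Finset.mem_sdiff.1 hi).1
    obtain ⟨_, _, hspl, _⟩ := h5 i (hmemC 4 i hi4) (htyp 4 i hi4)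
    linarith
  have h5sumsplit : ∑ i ∈ typeSet C typ 4, (s i + P i)
      = ∑ i ∈ typeSet C typ 4, s i + ∑ i ∈ typeSet C typ 4, P i := Finset.sum_add_distrib
  -- type ⑥
  have hc6le : 3 * ((typeSet C typ 5).card / 3) ≤ (typeSet C typ 5).card := Nat.mul_div_le _ _
  have hc6 : ((typeSet C typ 5 \ R6).card : ℝ) = 3 * (((typeSet C typ 5).card / 3 : ℕ) : ℝ) := by
    rw [Finset.card_sdiff_of_subset hR6, hR6card]
    push_cast [Nat.sub_sub_self hc6le]
    ring
  have h6split : ∑ i ∈ typeSet C typ 5 \ R6, (s i + P i) + ∑ i ∈ R6, (s i + P i)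
      = ∑ i ∈ typeSet C typ 5, (s i + P i) := Finset.sum_sdiff hR6
  have h6low : ((typeSet C typ 5 \ R6).card : ℝ) * (T / 3) ≤
      ∑ i ∈ typeSet C typ 5 \ R6, (s i + P i) := by
    apply sum_lower
    intro i hi
    have hi5 : i ∈ typeSet C typ 5 := (Finset.mem_sdiff.1 hi).1
    obtain ⟨_, _, hspl, _⟩ := h6 i (hmemC 5 i hi5) (htyp 5 i hi5)
    linarith
  have h6sumsplit : ∑ i ∈ typeSet C typ 5, (s i + P i)
      = ∑ i ∈ typeSet C typ 5, s i + ∑ i ∈ typeSet C typ 5, P i := Finset.sum_add_distrib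
  have h7sumsplit : ∑ i ∈ typeSet C typ 6, (s i + P i)
      = ∑ i ∈ typeSet C typ 6, s i + ∑ i ∈ typeSet C typ 6, P i := Finset.sum_add_distrib
  have h8sumsplit : ∑ i ∈ typeSet C typ 7, (s i + P i)
      = ∑ i ∈ typeSet C typ 7, s i + ∑ i ∈ typeSet C typ 7, P i := Finset.sum_add_distrib
  -- finish
  rw [ge_iff_le, one_div, inv_mul_eq_div, le_div_iff₀ hT, add_mul, add_mul, add_mul, add_mul,
    add_mul, div_mul_cancel₀ _ hT']
  unfold Lnice
  rw [hc3] at h3low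
  rw [hc5] at h5low
  rw [hc6] at h6low
  rw [hU01] at hA
  rw [hrdec, hU345, hPdec]
  linarith [h3split, h5split, h6split]
end

section
/- If ∑_{all i}(α_i·s_i + P_i) ≤ m·T, where α_i = ⌈P_i/(T−s_i)⌉, then m_nice ≤ m. (This is the arithmetic content of Theorem 3(i): if m < m_nice, then no feasible schedule with makespan T exists, i.e., T < OPT.) -/
open Finset

variable {ι : Type*} [DecidableEq ι]

/-!
In a schedule of makespan `T`, class `i` must be cut into at least `α_i` pieces, each preceded
by its setup, so it occupies machine time at least `load i = α_i s_i + P_i`; the hypothesis says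
that the total load fits on `m` machines. Every summand of `m_nice` is paid for by the loads of
the classes it counts: `α'_i T ≤ load i` for types ① and ②, a pair of type-③ classes has load at
least `3T`, a type-④ class at least `T`, a pair of type-⑤ or a triple of type-⑥ classes at least
`T`, and the classes left over contribute their load to `r_nice`. Hence
`m_nice T < ∑ load + T ≤ (m + 1) T`.
-/

noncomputable def load (T : ℝ) (s P : ι → ℝ) (i : ι) : ℝ :=
  alphaCeil T s P i * s i + P i

section Load

variable {T : ℝ} {s P : ι → ℝ} {i : ι}

omit [DecidableEq ι] in
theorem alpha'_mul_le_load (hs : 0 ≤ s i) (hsT : s i < T) (hP : 0 ≤ P i) :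
    (alpha' T s P i : ℝ) * T ≤ load T s P i := by
  have hTs : 0 < T - s i := by linarith
  have hfloor : (alpha' T s P i : ℝ) * (T - s i) ≤ P i :=
    (le_div_iff₀ hTs).1 (Nat.floor_le (div_nonneg hP hTs.le))
  have hle : (alpha' T s P i : ℝ) ≤ alphaCeil T s P i := by
    exact_mod_cast Nat.floor_le_ceil _
  unfold load
  nlinarith

omit [DecidableEq ι] in
theorem add_le_load (hs : 0 ≤ s i) (hsT : s i < T) (hP : 0 < P i) :
    s i + P i ≤ load T s P i := by
  have hone : (1 : ℝ) ≤ alphaCeil T s P i := by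
    exact_mod_cast Nat.ceil_pos.2 (div_pos hP (sub_pos.2 hsT))
  unfold load
  nlinarith

omit [DecidableEq ι] in
theorem two_mul_add_le_load (hs : 0 ≤ s i) (hsT : s i < T) (hP : T - s i < P i) :
    2 * s i + P i ≤ load T s P i := by
  have htwo : (2 : ℝ) ≤ alphaCeil T s P i := by
    exact_mod_cast Nat.lt_ceil.2 (by exact_mod_cast (one_lt_div (sub_pos.2 hsT)).2 hP)
  unfold load
  nlinarith

end Load

theorem sum_union_le_sum_add_sum {M : Type*} [AddCommMonoid M] [PartialOrder M]
    [IsOrderedAddMonoid M] {A B : Finset ι} {f : ι → M} (hf : ∀ i ∈ A ∩ B, 0 ≤ f i) :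
    ∑ i ∈ A ∪ B, f i ≤ ∑ i ∈ A, f i + ∑ i ∈ B, f i := by
  rw [← sum_union_inter]
  exact le_add_of_nonneg_right (sum_nonneg hf)

/-- `S \ R` splits into `#S / q` groups of `q` elements, and each group has `f`-sum at least `b`. -/
theorem card_div_mul_add_sum_le_sum {S R : Finset ι} {q : ℕ} (hR : R ⊆ S)
    (hRcard : #R = #S - q * (#S / q)) {f g : ι → ℝ} {b : ℝ} (hb : ∀ i ∈ S, b ≤ q * f i)
    (hgf : ∀ i ∈ R, g i ≤ f i) :
    ((#S / q : ℕ) : ℝ) * b + ∑ i ∈ R, g i ≤ ∑ i ∈ S, f i := by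
  have hcard : #(S \ R) = q * (#S / q) := by
    rw [card_sdiff_of_subset hR, hRcard]
    have := Nat.mul_div_le #S q
    omega
  have hgroups : ((#S / q : ℕ) : ℝ) * b ≤ ∑ i ∈ S \ R, f i := by
    rcases Nat.eq_zero_or_pos q with rfl | hq
    · rw [zero_mul, card_eq_zero] at hcard
      simp [hcard]
    · have h := card_nsmul_le_sum (S \ R) (fun i => q * f i) b
        fun i hi => hb i (mem_sdiff.1 hi).1
      rw [hcard, nsmul_eq_mul, ← mul_sum] at h
      push_cast at h
      nlinarith [(Nat.cast_pos (α := ℝ)).2 hq]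
  rw [← sum_sdiff hR]
  linarith [sum_le_sum hgf]

theorem natCeil_div_mul_lt_add {r T : ℝ} (hr : 0 ≤ r) (hT : 0 < T) :
    (⌈r / T⌉₊ : ℝ) * T < r + T := by
  have h := Nat.ceil_lt_add_one (div_nonneg hr hT.le)
  rwa [div_add_one hT.ne', lt_div_iff₀ hT] at h

section Instance

variable {T : ℝ} {C : Finset ι} {s P : ι → ℝ} {typ : ι → Fin 8} {R3 R5 R6 : Finset ι}

omit [DecidableEq ι] in
theorem mem_typeSet {k : Fin 8} {i : ι} : i ∈ typeSet C typ k ↔ i ∈ C ∧ typ i = k :=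
  mem_filter

omit [DecidableEq ι] in
theorem typeSet_subset (k : Fin 8) : typeSet C typ k ⊆ C :=
  filter_subset _ _

omit [DecidableEq ι] in
theorem disjoint_typeSet {k l : Fin 8} (h : k ≠ l) :
    Disjoint (typeSet C typ k) (typeSet C typ l) :=
  disjoint_filter.2 fun _ _ hk hl => h (hk.symm.trans hl)

omit [DecidableEq ι] in
theorem sum_load_eq_sum_typeSet :
    ∑ i ∈ C, load T s P i = ∑ k : Fin 8, ∑ i ∈ typeSet C typ k, load T s P i :=
  (sum_fiberwise C typ _).symm

omit [DecidableEq ι] in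
theorem add_le_load_of_mem (hs : ∀ i ∈ C, 0 ≤ s i ∧ s i < T) (hP : ∀ i ∈ C, 0 < P i)
    {i : ι} (hi : i ∈ C) : s i + P i ≤ load T s P i :=
  add_le_load (hs i hi).1 (hs i hi).2 (hP i hi)

theorem rnice_nonneg (hs : ∀ i ∈ C, 0 ≤ s i) (hP : ∀ i ∈ C, 0 ≤ P i) (hR3 : R3 ⊆ C)
    (hR5 : R5 ⊆ C) (hR6 : R6 ⊆ C) : 0 ≤ rnice C s P typ R3 R5 R6 := by
  have hU : R5 ∪ R6 ∪ typeSet C typ 6 ∪ typeSet C typ 7 ⊆ C :=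
    union_subset (union_subset (union_subset hR5 hR6) (typeSet_subset _)) (typeSet_subset _)
  refine add_nonneg (sum_nonneg fun i hi => ?_) (sum_nonneg fun i hi => ?_)
  · linarith [hs i (hR3 hi), hP i (hR3 hi)]
  · linarith [hs i (hU hi), hP i (hU hi)]

theorem rnice_le (hsP : ∀ i ∈ C, 0 ≤ s i + P i) (hR5 : R5 ⊆ C) (hR6 : R6 ⊆ C) :
    rnice C s P typ R3 R5 R6 ≤ ∑ i ∈ R3, (2 * s i + P i) + ∑ i ∈ R5, (s i + P i)
      + ∑ i ∈ R6, (s i + P i) + ∑ i ∈ typeSet C typ 6, (s i + P i)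
      + ∑ i ∈ typeSet C typ 7, (s i + P i) := by
  have hnn : ∀ A : Finset ι, A ⊆ C → ∀ B : Finset ι, ∀ i ∈ A ∩ B, 0 ≤ s i + P i :=
    fun A hA B i hi => hsP i (hA (mem_inter.1 hi).1)
  have h56 := sum_union_le_sum_add_sum (hnn R5 hR5 R6)
  have h567 := sum_union_le_sum_add_sum (hnn _ (union_subset hR5 hR6) (typeSet C typ 6))
  have h5678 := sum_union_le_sum_add_sum
    (hnn _ (union_subset (union_subset hR5 hR6) (typeSet_subset (typ := typ) 6))
      (typeSet C typ 7))
  unfold rnice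
  linarith

omit [DecidableEq ι] in
theorem sum_alpha'_mul_le_sum_load (hs : ∀ i ∈ C, 0 ≤ s i ∧ s i < T)
    (hP : ∀ i ∈ C, 0 < P i) (k : Fin 8) :
    (∑ i ∈ typeSet C typ k, (alpha' T s P i : ℝ)) * T ≤ ∑ i ∈ typeSet C typ k, load T s P i := by
  rw [sum_mul]
  refine sum_le_sum fun i hi => ?_
  have hiC := typeSet_subset k hi
  exact alpha'_mul_le_load (hs i hiC).1 (hs i hiC).2 (hP i hiC).le

theorem three_mul_card_div_two_mul_add_le_sum_load {k : Fin 8}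
    (hs : ∀ i ∈ C, 0 ≤ s i ∧ s i < T)
    (hk : ∀ i ∈ C, typ i = k → T / 3 ≤ s i ∧ 4 * T / 3 < s i + P i)
    (hR : R3 ⊆ typeSet C typ k)
    (hRcard : #R3 = #(typeSet C typ k) - 2 * (#(typeSet C typ k) / 2)) :
    3 * ((#(typeSet C typ k) / 2 : ℕ) : ℝ) * T + ∑ i ∈ R3, (2 * s i + P i)
      ≤ ∑ i ∈ typeSet C typ k, load T s P i := by
  have hdouble : ∀ i ∈ typeSet C typ k, 2 * s i + P i ≤ load T s P i := fun i hi => by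
    obtain ⟨hiC, hik⟩ := mem_typeSet.1 hi
    exact two_mul_add_le_load (hs i hiC).1 (hs i hiC).2 (by linarith [hk i hiC hik, hs i hiC])
  have h := card_div_mul_add_sum_le_sum hR hRcard (b := 3 * T)
    (fun i hi => by
      obtain ⟨hiC, hik⟩ := mem_typeSet.1 hi
      push_cast
      linarith [hk i hiC hik, hs i hiC, hdouble i hi]) fun i hi => hdouble i (hR hi)
  linarith

theorem card_div_mul_add_le_sum_load {k : Fin 8} {R : Finset ι} {q : ℕ}
    (hs : ∀ i ∈ C, 0 ≤ s i ∧ s i < T) (hP : ∀ i ∈ C, 0 < P i)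
    (hk : ∀ i ∈ C, typ i = k → T ≤ q * (s i + P i))
    (hR : R ⊆ typeSet C typ k)
    (hRcard : #R = #(typeSet C typ k) - q * (#(typeSet C typ k) / q)) :
    ((#(typeSet C typ k) / q : ℕ) : ℝ) * T + ∑ i ∈ R, (s i + P i)
      ≤ ∑ i ∈ typeSet C typ k, load T s P i := by
  have hsP : ∀ i ∈ typeSet C typ k, s i + P i ≤ load T s P i := fun i hi =>
    add_le_load_of_mem hs hP (typeSet_subset k hi)
  refine card_div_mul_add_sum_le_sum hR hRcard (fun i hi => ?_) fun i hi => hsP i (hR hi)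
  obtain ⟨hiC, hik⟩ := mem_typeSet.1 hi
  exact (hk i hiC hik).trans (by gcongr; exact hsP i hi)

theorem mnice_mul_lt_sum_load_add (hT : 0 < T) (hs : ∀ i ∈ C, 0 ≤ s i ∧ s i < T)
    (hP : ∀ i ∈ C, 0 < P i)
    (h3 : ∀ i ∈ C, typ i = 2 →
      T / 3 ≤ s i ∧ s i < 2 * T / 3 ∧ 4 * T / 3 < s i + P i ∧ s i + P i < 2 * T - s i)
    (h4 : ∀ i ∈ C, typ i = 3 →
      T / 3 ≤ s i ∧ s i < 2 * T / 3 ∧ T ≤ s i + P i ∧ s i + P i ≤ 4 * T / 3)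
    (h5 : ∀ i ∈ C, typ i = 4 →
      T / 3 ≤ s i ∧ s i < 2 * T / 3 ∧ T / 2 < s i + P i ∧ s i + P i ≤ 2 * T / 3)
    (h6 : ∀ i ∈ C, typ i = 5 →
      T / 3 ≤ s i ∧ s i < 2 * T / 3 ∧ T / 3 < s i + P i ∧ s i + P i ≤ 4 * T / 9)
    (hR3 : R3 ⊆ typeSet C typ 2)
    (hR3card : #R3 = #(typeSet C typ 2) - 2 * (#(typeSet C typ 2) / 2))
    (hR5 : R5 ⊆ typeSet C typ 4)
    (hR5card : #R5 = #(typeSet C typ 4) - 2 * (#(typeSet C typ 4) / 2))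
    (hR6 : R6 ⊆ typeSet C typ 5)
    (hR6card : #R6 = #(typeSet C typ 5) - 3 * (#(typeSet C typ 5) / 3)) :
    (mnice T C s P typ R3 R5 R6 : ℝ) * T < ∑ i ∈ C, load T s P i + T := by
  have b2 := three_mul_card_div_two_mul_add_le_sum_load hs
    (fun i hi hk => ⟨(h3 i hi hk).1, (h3 i hi hk).2.2.1⟩) hR3 hR3card
  have b3 := card_div_mul_add_le_sum_load (R := ∅) (q := 1) hs hP
    (fun i hi hk => by push_cast; linarith [h4 i hi hk]) (empty_subset _) (by simp)
  have b4 := card_div_mul_add_le_sum_load hs hP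
    (fun i hi hk => by push_cast; linarith [h5 i hi hk]) hR5 hR5card
  have b5 := card_div_mul_add_le_sum_load hs hP
    (fun i hi hk => by push_cast; linarith [h6 i hi hk]) hR6 hR6card
  have b6 : ∀ k, ∑ i ∈ typeSet C typ k, (s i + P i) ≤ ∑ i ∈ typeSet C typ k, load T s P i :=
    fun k => sum_le_sum fun i hi => add_le_load_of_mem hs hP (typeSet_subset k hi)
  have hr := rnice_le (s := s) (P := P) (typ := typ) (R3 := R3)
    (fun i hi => by linarith [(hs i hi).1, hP i hi])
    (hR5.trans (typeSet_subset 4)) (hR6.trans (typeSet_subset 5))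
  have hceil := natCeil_div_mul_lt_add (rnice_nonneg (typ := typ) (fun i hi => (hs i hi).1)
    (fun i hi => (hP i hi).le) (hR3.trans (typeSet_subset 2)) (hR5.trans (typeSet_subset 4))
    (hR6.trans (typeSet_subset 5))) hT
  simp only [Nat.div_one, sum_empty, add_zero] at b3
  rw [sum_load_eq_sum_typeSet (typ := typ), Fin.sum_univ_eight]
  push_cast [mnice,
    sum_union (disjoint_typeSet (C := C) (typ := typ) (by decide : (0 : Fin 8) ≠ 1))]
  linarith [sum_alpha'_mul_le_sum_load (typ := typ) hs hP 0,
    sum_alpha'_mul_le_sum_load (typ := typ) hs hP 1, b6 6, b6 7]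

end Instance

theorem stmt_7_general (T : ℝ) (hT : 0 < T) (m : ℕ)
    (C : Finset ι) (s P : ι → ℝ) (typ : ι → Fin 8)
    (hs : ∀ i ∈ C, 0 ≤ s i ∧ s i < T) (hP : ∀ i ∈ C, 0 < P i)
    (h3 : ∀ i ∈ C, typ i = 2 →
      T / 3 ≤ s i ∧ s i < 2 * T / 3 ∧ 4 * T / 3 < s i + P i ∧ s i + P i < 2 * T - s i)
    (h4 : ∀ i ∈ C, typ i = 3 →
      T / 3 ≤ s i ∧ s i < 2 * T / 3 ∧ T ≤ s i + P i ∧ s i + P i ≤ 4 * T / 3)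
    (h5 : ∀ i ∈ C, typ i = 4 →
      T / 3 ≤ s i ∧ s i < 2 * T / 3 ∧ T / 2 < s i + P i ∧ s i + P i ≤ 2 * T / 3)
    (h6 : ∀ i ∈ C, typ i = 5 →
      T / 3 ≤ s i ∧ s i < 2 * T / 3 ∧ T / 3 < s i + P i ∧ s i + P i ≤ 4 * T / 9)
    (R3 R5 R6 : Finset ι)
    (hR3 : R3 ⊆ typeSet C typ 2)
    (hR3card : R3.card = (typeSet C typ 2).card - 2 * ((typeSet C typ 2).card / 2))
    (hR5 : R5 ⊆ typeSet C typ 4)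
    (hR5card : R5.card = (typeSet C typ 4).card - 2 * ((typeSet C typ 4).card / 2))
    (hR6 : R6 ⊆ typeSet C typ 5)
    (hR6card : R6.card = (typeSet C typ 5).card - 3 * ((typeSet C typ 5).card / 3))
    (hL : ∑ i ∈ C, ((alphaCeil T s P i : ℝ) * s i + P i) ≤ (m : ℝ) * T) :
    mnice T C s P typ R3 R5 R6 ≤ m := by
  have hload : ∑ i ∈ C, load T s P i ≤ m * T := hL
  have hlt : (mnice T C s P typ R3 R5 R6 : ℝ) * T < (m + 1) * T := by
    linarith [mnice_mul_lt_sum_load_add hT hs hP h3 h4 h5 h6 hR3 hR3card hR5 hR5card hR6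
      hR6card]
  have hlt' : mnice T C s P typ R3 R5 R6 < m + 1 := by
    exact_mod_cast lt_of_mul_lt_mul_right hlt hT.le
  omega

/-- arithmetic content of Theorem 3(i):
if `∑ i (α_i·s_i + P_i) ≤ m·T` then `m_nice ≤ m`. -/
theorem stmt_7 (T : ℝ) (hT : 0 < T) (m : ℕ) (hm : 1 ≤ m)
    (C : Finset ι) (s P : ι → ℝ) (typ : ι → Fin 8)
    (hs : ∀ i ∈ C, 0 ≤ s i ∧ s i < T) (hP : ∀ i ∈ C, 0 < P i)
    (h1 : ∀ i ∈ C, typ i = 0 →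
      2 * T / 3 ≤ s i ∧ T ≤ s i + P i ∧ s i + P i ≤ (m : ℝ) * T)
    (h2 : ∀ i ∈ C, typ i = 1 →
      T / 3 ≤ s i ∧ s i < 2 * T / 3 ∧ 2 * T - s i ≤ s i + P i ∧ s i + P i ≤ (m : ℝ) * T)
    (h3 : ∀ i ∈ C, typ i = 2 →
      T / 3 ≤ s i ∧ s i < 2 * T / 3 ∧ 4 * T / 3 < s i + P i ∧ s i + P i < 2 * T - s i)
    (h4 : ∀ i ∈ C, typ i = 3 →
      T / 3 ≤ s i ∧ s i < 2 * T / 3 ∧ T ≤ s i + P i ∧ s i + P i ≤ 4 * T / 3)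
    (h5 : ∀ i ∈ C, typ i = 4 →
      T / 3 ≤ s i ∧ s i < 2 * T / 3 ∧ T / 2 < s i + P i ∧ s i + P i ≤ 2 * T / 3)
    (h6 : ∀ i ∈ C, typ i = 5 →
      T / 3 ≤ s i ∧ s i < 2 * T / 3 ∧ T / 3 < s i + P i ∧ s i + P i ≤ 4 * T / 9)
    (h7 : ∀ i ∈ C, typ i = 6 → 0 ≤ s i ∧ s i < T / 3)
    (h8 : ∀ i ∈ C, typ i = 7 →
      T / 3 ≤ s i ∧ s i < 2 * T / 3 ∧ 4 * T / 9 < s i + P i ∧ s i + P i ≤ T / 2)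
    (R3 R5 R6 : Finset ι)
    (hR3 : R3 ⊆ typeSet C typ 2)
    (hR3card : R3.card = (typeSet C typ 2).card - 2 * ((typeSet C typ 2).card / 2))
    (hR5 : R5 ⊆ typeSet C typ 4)
    (hR5card : R5.card = (typeSet C typ 4).card - 2 * ((typeSet C typ 4).card / 2))
    (hR6 : R6 ⊆ typeSet C typ 5)
    (hR6card : R6.card = (typeSet C typ 5).card - 3 * ((typeSet C typ 5).card / 3))
    (hL : ∑ i ∈ C, ((alphaCeil T s P i : ℝ) * s i + P i) ≤ (m : ℝ) * T) :
    mnice T C s P typ R3 R5 R6 ≤ m :=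
  stmt_7_general T hT m C s P typ hs hP h3 h4 h5 h6 R3 R5 R6 hR3 hR3card hR5 hR5card hR6 hR6card hL
end
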